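/- arXiv:2004.02425 — 2 statements merged into one kernel-verified Lean document; each statement's English description precedes it below -/
import Mathlib

section
/- Let A be a nonnegative N×N matrix with nonnegative rank at most k, i.e., A = ∑_{j=1}^k v_j u_j^T for nonnegative vectors v_j, u_j ∈ ℝ_{≥0}^N. Then perm(A) = ∑_{α} (1/∏_j α_j!) · perm(V^α) · perm(U^α), where the sum ranges over all α ∈ ℤ_{≥0}^k with ∑_j α_j = N, and V^α (respectively U^α) is the N×N matrix whose columns consist of α_1 copies of v_1, α_2 copies of v_2, ..., α_k copies of v_k (respectively of the u_j's). -/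
open Finset

/-- The permanent of a square real matrix. -/
noncomputable def permanent {n : Type*} [DecidableEq n] [Fintype n]
    (M : Matrix n n ℝ) : ℝ :=
  ∑ σ : Equiv.Perm n, ∏ i, M i (σ i)

lemma perm_transpose {n : Type*} [DecidableEq n] [Fintype n] (M : Matrix n n ℝ) :
    permanent M = ∑ σ : Equiv.Perm n, ∏ i, M (σ i) i := by
  unfold permanent
  rw [← Equiv.sum_comp (Equiv.inv (Equiv.Perm n)) (fun σ => ∏ i, M (σ i) i)]
  refine Finset.sum_congr rfl fun σ _ => ?_
  rw [← Equiv.prod_comp σ (fun i => M ((Equiv.inv (Equiv.Perm n) σ) i) i)]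
  simp

lemma e_cast {N k : ℕ} {f b : Fin N → Fin k}
    (e : ∀ j, {x // f x = j} ≃ {x // b x = j}) {j j' : Fin k} (h : j = j')
    (x : Fin N) (hx : f x = j) :
    ((e j ⟨x, hx⟩ : {x // b x = j}) : Fin N) = ((e j' ⟨x, hx.trans h⟩ : {x // b x = j'}) : Fin N) := by
  subst h; rfl

lemma card_sections {N k : ℕ} (f b : Fin N → Fin k)
    (h : ∀ j, (univ.filter fun x => f x = j).card = (univ.filter fun x => b x = j).card) :
    Fintype.card {σ : Equiv.Perm (Fin N) // ∀ x, b (σ x) = f x}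
      = ∏ j, ((univ.filter fun x => f x = j).card).factorial := by
  have hcard : ∀ j : Fin k, Fintype.card {x // f x = j} = Fintype.card {x // b x = j} := by
    intro j; rw [Fintype.card_subtype, Fintype.card_subtype, h j]
  set F : (∀ j, ({x // f x = j} ≃ {x // b x = j})) → (Fin N → Fin N) :=
    fun e x => (e (f x) ⟨x, rfl⟩ : {z // b z = f x}) with hF
  have hFb : ∀ e x, b (F e x) = f x := fun e x => (e (f x) ⟨x, rfl⟩).2
  have hFinj : ∀ e, Function.Injective (F e) := by
    intro e x y hxy
    have hf : f x = f y := by rw [← hFb e x, ← hFb e y, hxy]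
    have h1 : ((e (f y) ⟨x, hf⟩ : {z // b z = f y}) : Fin N)
        = ((e (f y) ⟨y, rfl⟩ : {z // b z = f y}) : Fin N) := by
      rw [← e_cast e hf x rfl]; exact hxy
    have := (e (f y)).injective (Subtype.ext h1)
    exact congrArg Subtype.val this
  let Φ : (∀ j, ({x // f x = j} ≃ {x // b x = j})) →
      {σ : Equiv.Perm (Fin N) // ∀ x, b (σ x) = f x} :=
    fun e => ⟨Equiv.ofBijective (F e) ((Finite.injective_iff_bijective).mp (hFinj e)),
      fun x => hFb e x⟩
  have hbij : Function.Bijective Φ := by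
    constructor
    · intro e e' hee
      have hfun : F e = F e' := by
        have := congrArg (fun s => (s : {σ : Equiv.Perm (Fin N) // ∀ x, b (σ x) = f x}).1.toFun) hee
        exact this
      funext j
      apply Equiv.ext
      rintro ⟨x, hx⟩
      apply Subtype.ext
      have h1 := congrFun hfun x
      have h2 : ((e (f x) ⟨x, rfl⟩ : {z // b z = f x}) : Fin N)
          = ((e j ⟨x, hx⟩ : {z // b z = j}) : Fin N) := e_cast e hx x rfl
      have h3 : ((e' (f x) ⟨x, rfl⟩ : {z // b z = f x}) : Fin N)
          = ((e' j ⟨x, hx⟩ : {z // b z = j}) : Fin N) := e_cast e' hx x rfl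
      rw [← h2, ← h3]
      exact h1
    · rintro ⟨σ, hσ⟩
      have hinj : ∀ j : Fin k, Function.Injective
          (fun x : {x // f x = j} => (⟨σ x.1, by rw [hσ]; exact x.2⟩ : {z // b z = j})) := by
        intro j x y hxy
        apply Subtype.ext
        exact σ.injective (congrArg Subtype.val hxy)
      have hb : ∀ j : Fin k, Function.Bijective
          (fun x : {x // f x = j} => (⟨σ x.1, by rw [hσ]; exact x.2⟩ : {z // b z = j})) := by
        intro j
        rw [Fintype.bijective_iff_injective_and_card]
        exact ⟨hinj j, hcard j⟩
      refine ⟨fun j => Equiv.ofBijective _ (hb j), ?_⟩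
      apply Subtype.ext
      apply Equiv.ext
      intro x
      rfl
  rw [← Fintype.card_of_bijective hbij, Fintype.card_pi]
  refine Finset.prod_congr rfl fun j _ => ?_
  rw [Fintype.card_equiv (Fintype.equivOfCardEq (hcard j)), Fintype.card_subtype]

theorem stmt8 {N k : ℕ} (v u : Fin k → Fin N → ℝ)
    (hv : ∀ j x, 0 ≤ v j x) (hu : ∀ j y, 0 ≤ u j y)
    (A : Matrix (Fin N) (Fin N) ℝ)
    (hA : ∀ x y, A x y = ∑ j, v j x * u j y)
    (g : (Fin k → ℕ) → Fin N → Fin k)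
    (hg : ∀ α ∈ Finset.Nat.antidiagonalTuple k N, ∀ j,
      (Finset.univ.filter fun y => g α y = j).card = α j) :
    permanent A = ∑ α ∈ Finset.Nat.antidiagonalTuple k N,
      (∏ j, (Nat.factorial (α j) : ℝ))⁻¹ *
        permanent (Matrix.of fun x y => v (g α y) x) *
        permanent (Matrix.of fun x y => u (g α y) x) := by
  classical
  set c : (Fin N → Fin k) → (Fin k → ℕ) := fun f j => (univ.filter fun y => f y = j).card with hc
  -- Step 1 : expand the permanent
  have step1 : permanent A = ∑ f : Fin N → Fin k, ∑ π : Equiv.Perm (Fin N),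
      (∏ i, v (f i) i) * ∏ i, u (f i) (π i) := by
    unfold permanent
    have h1 : ∀ σ : Equiv.Perm (Fin N), ∏ i, A i (σ i)
        = ∑ f : Fin N → Fin k, (∏ i, v (f i) i) * ∏ i, u (f i) (σ i) := by
      intro σ
      calc ∏ i, A i (σ i) = ∏ i, ∑ j, v j i * u j (σ i) :=
            Finset.prod_congr rfl fun i _ => hA i (σ i)
        _ = ∑ f ∈ Fintype.piFinset (fun _ : Fin N => (univ : Finset (Fin k))),
              ∏ i, v (f i) i * u (f i) (σ i) := Finset.prod_univ_sum _ _
        _ = ∑ f : Fin N → Fin k, (∏ i, v (f i) i) * ∏ i, u (f i) (σ i) := by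
            rw [Fintype.piFinset_univ]
            exact Finset.sum_congr rfl fun f _ => Finset.prod_mul_distrib
    simp_rw [h1]
    exact Finset.sum_comm
  -- membership of the count vector
  have hmem : ∀ f : Fin N → Fin k, c f ∈ Finset.Nat.antidiagonalTuple k N := by
    intro f
    rw [Finset.Nat.mem_antidiagonalTuple]
    have h1 := Finset.card_eq_sum_card_fiberwise
      (fun (x : Fin N) (_ : x ∈ (univ : Finset (Fin N))) => mem_univ (f x))
    rw [card_univ, Fintype.card_fin] at h1
    exact h1.symm
  rw [step1, ← Finset.sum_fiberwise_of_maps_to (fun f _ => hmem f)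
      (fun f => ∑ π : Equiv.Perm (Fin N), (∏ i, v (f i) i) * ∏ i, u (f i) (π i))]
  refine Finset.sum_congr rfl fun α hα => ?_
  -- notation
  set a : Fin N → Fin k := g α with haa
  have ha : ∀ j, c a j = α j := hg α hα
  -- the two permanents in convenient form
  have hU : permanent (Matrix.of fun x y => u (a y) x : Matrix (Fin N) (Fin N) ℝ)
      = ∑ τ : Equiv.Perm (Fin N), ∏ x, u (a x) (τ x) := by
    rw [perm_transpose]; rfl
  have hV : permanent (Matrix.of fun x y => v (a y) x : Matrix (Fin N) (Fin N) ℝ)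
      = ∑ σ : Equiv.Perm (Fin N), ∏ x, v (a (σ x)) x := rfl
  -- claim D : for f in the fiber, the u-sum equals perm Uα
  have claimD : ∀ f ∈ univ.filter fun f => c f = α,
      ∑ π : Equiv.Perm (Fin N), ∏ i, u (f i) (π i)
        = ∑ τ : Equiv.Perm (Fin N), ∏ x, u (a x) (τ x) := by
    intro f hf
    rw [Finset.mem_filter] at hf
    have hcf : ∀ j, c f j = c a j := fun j => by rw [hf.2, ha]
    have hcard : ∀ j : Fin k, Fintype.card {x // f x = j} = Fintype.card {x // a x = j} := by
      intro j; rw [Fintype.card_subtype, Fintype.card_subtype]; exact hcf j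
    let ρ : Fin N ≃ Fin N := Equiv.ofFiberEquiv (f := f) (g := a)
      (fun j => Fintype.equivOfCardEq (hcard j))
    have hρ : ∀ x, a (ρ x) = f x := fun x => Equiv.ofFiberEquiv_map _ x
    calc ∑ π : Equiv.Perm (Fin N), ∏ i, u (f i) (π i)
        = ∑ π : Equiv.Perm (Fin N), ∏ i, u (a (ρ i)) (π i) := by
          refine Finset.sum_congr rfl fun π _ => Finset.prod_congr rfl fun i _ => by rw [hρ]
      _ = ∑ π : Equiv.Perm (Fin N), ∏ x, u (a x) (π (ρ.symm x)) := by
          refine Finset.sum_congr rfl fun π _ => ?_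
          rw [← Equiv.prod_comp ρ (fun x => u (a x) (π (ρ.symm x)))]
          simp
      _ = ∑ τ : Equiv.Perm (Fin N), ∏ x, u (a x) (τ x) := by
          rw [← Equiv.sum_comp (Equiv.mulRight (ρ⁻¹ : Equiv.Perm (Fin N)))
            (fun τ : Equiv.Perm (Fin N) => ∏ x, u (a x) (τ x))]
          refine Finset.sum_congr rfl fun π _ => Finset.prod_congr rfl fun x _ => ?_
          simp [Equiv.Perm.mul_apply]
  -- claim C : perm Vα = (∏ α_j !) * ∑_{fiber} ∏ v
  have hmaps : ∀ σ : Equiv.Perm (Fin N), c (fun x => a (σ x)) = α := by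
    intro σ
    funext j
    have : (univ.filter fun x => a (σ x) = j) = (univ.filter fun y => a y = j).image σ.symm := by
      ext x
      simp only [mem_filter, mem_univ, true_and, Finset.mem_image]
      constructor
      · intro h; exact ⟨σ x, by simp [h]⟩
      · rintro ⟨y, hy, rfl⟩; simpa using hy
    rw [hc]
    simp only [this]
    rw [Finset.card_image_of_injective _ σ.symm.injective]
    exact ha j
  have claimC : permanent (Matrix.of fun x y => v (a y) x : Matrix (Fin N) (Fin N) ℝ)
      = (∏ j, ((α j).factorial : ℝ)) * ∑ f ∈ univ.filter fun f => c f = α, ∏ i, v (f i) i := by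
    rw [hV]
    rw [← Finset.sum_fiberwise_of_maps_to (g := fun (σ : Equiv.Perm (Fin N)) => fun x => a (σ x))
      (t := univ.filter fun f => c f = α)
      (fun σ _ => Finset.mem_filter.mpr ⟨mem_univ _, hmaps σ⟩)
      (fun σ : Equiv.Perm (Fin N) => ∏ x, v (a (σ x)) x)]
    rw [Finset.mul_sum]
    refine Finset.sum_congr rfl fun f hf => ?_
    rw [Finset.mem_filter] at hf
    have hcf : ∀ j, c f j = c a j := fun j => by rw [hf.2, ha]
    have hinner : ∀ σ ∈ univ.filter (fun σ : Equiv.Perm (Fin N) => (fun x => a (σ x)) = f),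
        ∏ x, v (a (σ x)) x = ∏ x, v (f x) x := by
      intro σ hσ
      rw [Finset.mem_filter] at hσ
      exact Finset.prod_congr rfl fun x _ => by rw [← hσ.2]
    rw [Finset.sum_congr rfl hinner, Finset.sum_const, nsmul_eq_mul]
    congr 1
    have hfil : (univ.filter fun σ : Equiv.Perm (Fin N) => (fun x => a (σ x)) = f)
        = univ.filter fun σ : Equiv.Perm (Fin N) => ∀ x, a (σ x) = f x := by
      simp [funext_iff]
    rw [hfil, ← Fintype.card_subtype, card_sections f a hcf]
    push_cast
    exact Finset.prod_congr rfl fun j _ => by rw [← hf.2]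
  -- assemble
  have hfact : (∏ j, ((α j).factorial : ℝ)) ≠ 0 := by
    refine Finset.prod_ne_zero_iff.mpr fun j _ => ?_
    exact_mod_cast (α j).factorial_ne_zero
  calc ∑ f ∈ univ.filter fun f => c f = α,
        ∑ π : Equiv.Perm (Fin N), (∏ i, v (f i) i) * ∏ i, u (f i) (π i)
      = ∑ f ∈ univ.filter fun f => c f = α,
        (∏ i, v (f i) i) * ∑ π : Equiv.Perm (Fin N), ∏ i, u (f i) (π i) := by
        refine Finset.sum_congr rfl fun f _ => ?_
        rw [Finset.mul_sum]
    _ = ∑ f ∈ univ.filter fun f => c f = α,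
        (∏ i, v (f i) i) * ∑ τ : Equiv.Perm (Fin N), ∏ x, u (a x) (τ x) := by
        refine Finset.sum_congr rfl fun f hf => by rw [claimD f hf]
    _ = (∑ f ∈ univ.filter fun f => c f = α, ∏ i, v (f i) i)
          * ∑ τ : Equiv.Perm (Fin N), ∏ x, u (a x) (τ x) := by
        rw [Finset.sum_mul]
    _ = (∏ j, ((α j).factorial : ℝ))⁻¹
          * permanent (Matrix.of fun x y => v (a y) x : Matrix (Fin N) (Fin N) ℝ)
          * permanent (Matrix.of fun x y => u (a y) x : Matrix (Fin N) (Fin N) ℝ) := by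
        rw [hU, claimC]
        field_simp
end

section
/- Let x_0, ..., x_k ∈ (0,1) satisfy ∑_j x_j = a ∈ ℤ_{>0}, and let w_0 ≥ w_1 ≥ ... ≥ w_k ≥ 0. Then there exists a matrix z ∈ [0,1]^{(k+1)×(k+1)} such that: (1) each row sum of z is 0 or 1 and each column sum of z equals x_j; (2) ∑_i (∑_j z_{i,j})·w_i ≤ ∑_j x_j·w_j + max_j w_j; and (3) z_{i,j} > 0 implies i ≤ j. -/
private lemma clamp_step (c d A B : ℝ) (hAB : A ≤ B) (hcd : c ≤ d) :
    max 0 (min d B - max c A) = max c (min d B) - max c (min d A) := by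
  simp only [max_def, min_def]
  split_ifs <;> linarith

private lemma sum_clamp (T : ℕ → ℝ) (hT : Monotone T) (c d : ℝ) (hcd : c ≤ d)
    (n : ℕ) (h0 : T 0 ≤ c) (hn : d ≤ T n) :
    ∑ j ∈ Finset.range n, max 0 (min d (T (j+1)) - max c (T j)) = d - c := by
  have key : ∀ j, max 0 (min d (T (j+1)) - max c (T j))
      = max c (min d (T (j+1))) - max c (min d (T j)) :=
    fun j => clamp_step c d (T j) (T (j+1)) (hT (Nat.le_succ j)) hcd
  calc ∑ j ∈ Finset.range n, max 0 (min d (T (j+1)) - max c (T j))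
      = ∑ j ∈ Finset.range n, (max c (min d (T (j+1))) - max c (min d (T j))) :=
        Finset.sum_congr rfl (fun j _ => key j)
    _ = max c (min d (T n)) - max c (min d (T 0)) :=
        Finset.sum_range_sub (fun j => max c (min d (T j))) n
    _ = d - c := by rw [min_eq_left hn, max_eq_right hcd, min_eq_right (h0.trans hcd), max_eq_left h0]

theorem stmt15 {k : ℕ} (x w : Fin (k + 1) → ℝ)
    (hx0 : ∀ j, 0 < x j) (hx1 : ∀ j, x j < 1)
    (a : ℕ) (ha : 0 < a) (hsum : ∑ j, x j = (a : ℝ))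
    (hw0 : ∀ j, 0 ≤ w j) (hmono : ∀ i j : Fin (k + 1), i ≤ j → w j ≤ w i) :
    ∃ z : Fin (k + 1) → Fin (k + 1) → ℝ,
      (∀ i j, 0 ≤ z i j ∧ z i j ≤ 1) ∧
      (∀ i, (∑ j, z i j = 0) ∨ (∑ j, z i j = 1)) ∧
      (∀ j, ∑ i, z i j = x j) ∧
      (∑ i, (∑ j, z i j) * w i ≤ (∑ j, x j * w j) +
        Finset.univ.sup' Finset.univ_nonempty w) ∧
      (∀ i j, 0 < z i j → i ≤ j) := by
  classical
  -- extended sequence and partial sums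
  set X : ℕ → ℝ := fun n => if h : n < k + 1 then x ⟨n, h⟩ else 0 with hXdef
  have hX0 : ∀ n, 0 ≤ X n := by
    intro n
    simp only [hXdef]
    split_ifs with h
    · exact (hx0 _).le
    · exact le_refl 0
  have hXcoe : ∀ j : Fin (k+1), X ↑j = x j := fun j => dif_pos j.isLt
  have hX1 : ∀ n, X n < 1 := by
    intro n
    simp only [hXdef]
    split_ifs with h
    · exact hx1 _
    · norm_num
  set S : ℕ → ℝ := fun n => ∑ j ∈ Finset.range n, X j with hSdef
  have hSsucc : ∀ n, S (n+1) = S n + X n := fun n => Finset.sum_range_succ X n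
  have hSmono : Monotone S := monotone_nat_of_le_succ (fun n => by rw [hSsucc]; linarith [hX0 n])
  have hS0 : S 0 = 0 := Finset.sum_range_zero X
  have hSnn : ∀ n, 0 ≤ S n := fun n => Finset.sum_nonneg (fun i _ => hX0 i)
  have hStop : S (k+1) = a := by
    calc S (k+1) = ∑ j : Fin (k+1), X ↑j := (Fin.sum_univ_eq_sum_range X (k+1)).symm
      _ = ∑ j, x j := Finset.sum_congr rfl (fun j _ => hXcoe j)
      _ = a := hsum
  -- starting column of each chunk
  set fnat : ℕ → ℕ := fun m => Nat.findGreatest (fun j => S j ≤ (m:ℝ)) k with hfdef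
  have hf_le : ∀ m, fnat m ≤ k := fun m => Nat.findGreatest_le k
  have hf_spec : ∀ m, S (fnat m) ≤ (m:ℝ) := fun m =>
    Nat.findGreatest_spec (P := fun j => S j ≤ (m:ℝ)) (Nat.zero_le k) (show S 0 ≤ (m:ℝ) by rw [hS0]; positivity)
  have hf_succ : ∀ m, m < a → (m:ℝ) < S (fnat m + 1) := by
    intro m hm
    by_cases h : fnat m = k
    · rw [h, hStop]; exact_mod_cast hm
    · have h1 : fnat m + 1 ≤ k := Nat.succ_le_of_lt (lt_of_le_of_ne (hf_le m) h)
      have h2 := Nat.findGreatest_is_greatest (Nat.lt_succ_self (fnat m)) h1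
      exact lt_of_not_ge h2
  -- overlap lengths
  set len : ℕ → ℕ → ℝ := fun m j => max 0 (min ((m:ℝ)+1) (S (j+1)) - max (m:ℝ) (S j)) with hlendef
  have hlen0 : ∀ m j, 0 ≤ len m j := fun m j => le_max_left _ _
  have hlen1 : ∀ m j, len m j ≤ 1 := by
    intro m j
    apply max_le (by norm_num)
    have h1 : min ((m:ℝ)+1) (S (j+1)) ≤ (m:ℝ)+1 := min_le_left _ _
    have h2 : (m:ℝ) ≤ max (m:ℝ) (S j) := le_max_left _ _
    linarith
  have hrow : ∀ m, m < a → ∑ j ∈ Finset.range (k+1), len m j = 1 := by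
    intro m hm
    have h := sum_clamp S hSmono (m:ℝ) ((m:ℝ)+1) (by linarith) (k+1)
      (by rw [hS0]; positivity) (by rw [hStop]; exact_mod_cast hm)
    simpa using h
  have hcol : ∀ j, j < k + 1 → ∑ m ∈ Finset.range a, len m j = X j := by
    intro j hj
    have h1 := sum_clamp (fun m => (m:ℝ)) (fun p q h => Nat.cast_le.mpr h)
      (S j) (S (j+1)) (hSmono (Nat.le_succ j)) a (by show ((0:ℕ):ℝ) ≤ S j; exact_mod_cast hSnn j)
      (by show S (j+1) ≤ (a:ℝ); rw [← hStop]; exact hSmono hj)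
    have h2 : ∀ m : ℕ, max 0 (min (S (j+1)) (((m+1 : ℕ)):ℝ) - max (S j) (m:ℝ)) = len m j := by
      intro m
      have hc : ((m+1:ℕ):ℝ) = (m:ℝ)+1 := by push_cast; ring
      rw [min_comm (S (j+1)) _, max_comm (S j) _, hc, hlendef]
    rw [Finset.sum_congr rfl (fun m _ => h2 m)] at h1
    rw [h1, hSsucc]; ring
  -- chunk-start as Fin, the matrix z
  set F : ℕ → Fin (k+1) := fun m => ⟨fnat m, Nat.lt_succ_of_le (hf_le m)⟩ with hFdef
  have hFval : ∀ m, (F m : ℕ) = fnat m := fun m => rfl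
  set z : Fin (k+1) → Fin (k+1) → ℝ :=
    fun i j => ∑ m ∈ Finset.range a, if F m = i then len m ↑j else 0 with hzdef
  have hz_eq : ∀ i j, z i j = ∑ m ∈ (Finset.range a).filter (fun m => F m = i), len m ↑j := by
    intro i j
    rw [hzdef]
    exact (Finset.sum_filter _ _).symm
  -- injectivity of F on range a
  have hkey : ∀ m1 m2, m1 < m2 → m2 < a → F m1 ≠ F m2 := by
    intro m1 m2 h12 h2a hEq
    have hi : fnat m1 = fnat m2 := congrArg Fin.val hEq
    have h1 : S (fnat m1) ≤ (m1:ℝ) := hf_spec m1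
    have h2 : (m2:ℝ) < S (fnat m1 + 1) := by rw [hi]; exact hf_succ m2 h2a
    have h3 : S (fnat m1 + 1) = S (fnat m1) + X (fnat m1) := hSsucc _
    have h4 : X (fnat m1) < 1 := hX1 _
    have h5 : (m1:ℝ) + 1 ≤ m2 := by exact_mod_cast h12
    linarith
  have hcard : ∀ i, ((Finset.range a).filter (fun m => F m = i)).card ≤ 1 := by
    intro i
    apply Finset.card_le_one.mpr
    intro m1 hm1 m2 hm2
    simp only [Finset.mem_filter, Finset.mem_range] at hm1 hm2
    rcases lt_trichotomy m1 m2 with h | h | h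
    · exact absurd (hm1.2.trans hm2.2.symm) (hkey m1 m2 h hm2.1)
    · exact h
    · exact absurd (hm2.2.trans hm1.2.symm) (hkey m2 m1 h hm1.1)
  have hrowz : ∀ i, ∑ j, z i j = (((Finset.range a).filter (fun m => F m = i)).card : ℝ) := by
    intro i
    calc ∑ j, z i j
        = ∑ j : Fin (k+1), ∑ m ∈ (Finset.range a).filter (fun m => F m = i), len m ↑j :=
          Finset.sum_congr rfl (fun j _ => hz_eq i j)
      _ = ∑ m ∈ (Finset.range a).filter (fun m => F m = i), ∑ j : Fin (k+1), len m ↑j :=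
          Finset.sum_comm
      _ = ∑ m ∈ (Finset.range a).filter (fun m => F m = i), (1:ℝ) := by
          apply Finset.sum_congr rfl
          intro m hm
          simp only [Finset.mem_filter, Finset.mem_range] at hm
          rw [Fin.sum_univ_eq_sum_range (fun j => len m j)]
          exact hrow m hm.1
      _ = _ := by simp
  refine ⟨z, ?_, ?_, ?_, ?_, ?_⟩
  · -- bounds
    intro i j
    constructor
    · rw [hzdef]
      apply Finset.sum_nonneg
      intro m _
      split_ifs
      · exact hlen0 m ↑j
      · exact le_refl 0
    · rw [hz_eq]
      calc ∑ m ∈ (Finset.range a).filter (fun m => F m = i), len m ↑j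
          ≤ ∑ m ∈ (Finset.range a).filter (fun m => F m = i), (1:ℝ) :=
            Finset.sum_le_sum (fun m _ => hlen1 m ↑j)
        _ = (((Finset.range a).filter (fun m => F m = i)).card : ℝ) := by simp
        _ ≤ 1 := by exact_mod_cast hcard i
  · -- row sums 0 or 1
    intro i
    rw [hrowz i]
    rcases Nat.le_one_iff_eq_zero_or_eq_one.mp (hcard i) with h | h <;> rw [h] <;> simp
  · -- column sums
    intro j
    calc ∑ i, z i j
        = ∑ m ∈ Finset.range a, ∑ i : Fin (k+1), if F m = i then len m ↑j else 0 := by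
          rw [hzdef]; exact Finset.sum_comm
      _ = ∑ m ∈ Finset.range a, len m ↑j := by
          apply Finset.sum_congr rfl
          intro m _
          simp [Finset.sum_ite_eq]
      _ = X ↑j := hcol ↑j j.isLt
      _ = x j := hXcoe j
  · -- the weight bound
    have hstep : ∀ i : Fin (k+1), (∑ j, z i j) * w i
        = ∑ m ∈ Finset.range a, (if F m = i then w i else 0) := by
      intro i
      rw [hrowz i]
      rw [← Finset.sum_boole, Finset.sum_mul]
      apply Finset.sum_congr rfl
      intro m _
      split_ifs <;> simp
    rw [Finset.sum_congr rfl (fun i _ => hstep i), Finset.sum_comm]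
    have hFsum : ∀ m : ℕ, ∑ i : Fin (k+1), (if F m = i then w i else 0) = w (F m) := by
      intro m
      simp [Finset.sum_ite_eq]
    rw [Finset.sum_congr rfl (fun m _ => hFsum m)]
    obtain ⟨b, rfl⟩ : ∃ b, a = b + 1 := ⟨a - 1, (Nat.succ_pred_eq_of_pos ha).symm⟩
    rw [Finset.sum_range_succ']
    have h01 : w (F 0) ≤ Finset.univ.sup' Finset.univ_nonempty w :=
      Finset.le_sup' w (Finset.mem_univ (F 0))
    have hmain : ∑ m ∈ Finset.range b, w (F (m+1)) ≤ ∑ j, x j * w j := by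
      have kb : ∀ m, m < b → w (F (m+1)) ≤ ∑ j : Fin (k+1), len m ↑j * w j := by
        intro m hm
        have hm1a : m + 1 < b + 1 := by omega
        have hone : ∑ j : Fin (k+1), len m ↑j = 1 := by
          rw [Fin.sum_univ_eq_sum_range (fun j => len m j)]
          exact hrow m (by omega)
        calc w (F (m+1)) = ∑ j : Fin (k+1), len m ↑j * w (F (m+1)) := by
              rw [← Finset.sum_mul, hone, one_mul]
          _ ≤ ∑ j : Fin (k+1), len m ↑j * w j := by
              apply Finset.sum_le_sum
              intro j _
              rcases eq_or_lt_of_le (hlen0 m ↑j) with h | h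
              · rw [← h]; simp
              · have hwle : w (F (m+1)) ≤ w j := by
                  apply hmono j (F (m+1))
                  rw [Fin.le_def]
                  show (j:ℕ) ≤ fnat (m+1)
                  by_contra hlt
                  push_neg at hlt
                  have hle : fnat (m+1) + 1 ≤ (j:ℕ) := hlt
                  have hS1 : S (fnat (m+1) + 1) ≤ S ↑j := hSmono hle
                  have hS2 : ((m+1:ℕ):ℝ) < S (fnat (m+1) + 1) := hf_succ (m+1) hm1a
                  -- from positivity of len: S ↑j < m + 1
                  have h3 : 0 < min ((m:ℝ)+1) (S (↑j+1)) - max (m:ℝ) (S ↑j) := by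
                    by_contra h4
                    push_neg at h4
                    have : len m ↑j = 0 := max_eq_left h4
                    linarith
                  have h5 : S ↑j ≤ max (m:ℝ) (S ↑j) := le_max_right _ _
                  have h6 : min ((m:ℝ)+1) (S (↑j+1)) ≤ (m:ℝ)+1 := min_le_left _ _
                  push_cast at hS2
                  linarith
                exact mul_le_mul_of_nonneg_left hwle (hlen0 m ↑j)
      calc ∑ m ∈ Finset.range b, w (F (m+1))
          ≤ ∑ m ∈ Finset.range b, ∑ j : Fin (k+1), len m ↑j * w j :=
            Finset.sum_le_sum (fun m hm => kb m (Finset.mem_range.mp hm))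
        _ ≤ ∑ m ∈ Finset.range (b+1), ∑ j : Fin (k+1), len m ↑j * w j :=
            Finset.sum_le_sum_of_subset_of_nonneg
              (Finset.range_subset_range.mpr (Nat.le_succ b))
              (fun m _ _ => Finset.sum_nonneg (fun j _ => mul_nonneg (hlen0 m ↑j) (hw0 j)))
        _ = ∑ j : Fin (k+1), (∑ m ∈ Finset.range (b+1), len m ↑j) * w j := by
            rw [Finset.sum_comm]
            exact Finset.sum_congr rfl (fun j _ => (Finset.sum_mul _ _ _).symm)
        _ = ∑ j, x j * w j := by
            apply Finset.sum_congr rfl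
            intro j _
            rw [hcol ↑j j.isLt, hXcoe j]
    linarith
  · -- support condition
    intro i j hpos
    rw [hz_eq] at hpos
    obtain ⟨m, hm, hlpos⟩ : ∃ m ∈ (Finset.range a).filter (fun m => F m = i), 0 < len m ↑j := by
      by_contra h
      push_neg at h
      have : ∑ m ∈ (Finset.range a).filter (fun m => F m = i), len m ↑j ≤ 0 :=
        Finset.sum_nonpos (fun m hm => h m hm)
      linarith
    simp only [Finset.mem_filter, Finset.mem_range] at hm
    have hfm : fnat m = (i:ℕ) := by rw [← hm.2]
    have h1 : S ↑i ≤ (m:ℝ) := by rw [← hfm]; exact hf_spec m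
    have h3 : 0 < min ((m:ℝ)+1) (S (↑j+1)) - max (m:ℝ) (S ↑j) := by
      by_contra h4
      push_neg at h4
      have : len m ↑j = 0 := max_eq_left h4
      linarith
    have h5 : (m:ℝ) ≤ max (m:ℝ) (S ↑j) := le_max_left _ _
    have h6 : min ((m:ℝ)+1) (S (↑j+1)) ≤ S (↑j+1) := min_le_right _ _
    rw [Fin.le_def]
    by_contra hij
    push_neg at hij
    have : S (↑j + 1) ≤ S ↑i := hSmono hij
    linarith
end
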